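/- Let d ≥ 1 and p > 2, and let Q : ℝ^d → ℝ be measurable with |Q(x)| ≤ C₁ (1+|x|)^{−(d−1)/2} e^{−|x|} for all x and some C₁ > 0. Then for any θ with 1 < θ < min(p−1, 2) there exists C > 0 such that for all z₁, z₂ ∈ ℝ^d with |z₁ − z₂| ≥ 1: ∫_{ℝ^d} |Q(x−z₁)|² |Q(x−z₂)|^{p−1} dx ≤ C (|z₁−z₂|^{−(d−1)/2} e^{−|z₁−z₂|})^{θ}. -/

import Mathlib

/-!
The triangle inequality `|z₁ - z₂| ≤ |x - z₁| + |x - z₂|` bounds the product of the two decay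
profiles at `x - z₁` and `x - z₂` pointwise by the `θ`-th power of the profile at `z₁ - z₂`,
times the surplus `e^{-(2 - θ)|x - z₁|}` left over because `θ < 2`; for the algebraic factors,
`|z₁ - z₂| ≤ (1 + |x - z₁|)(1 + |x - z₂|)` and `θ ≤ min 2 (p - 1)`. The surplus is integrable,
being dominated by `(1 + |x|)^{-(d+1)}` via a Taylor term of the exponential.
-/

noncomputable section

open MeasureTheory

abbrev Euc (d : ℕ) := EuclideanSpace ℝ (Fin d)

open Real Module Nat

lemma exp_neg_mul_le_one_add_rpow {ε r : ℝ} (hε : 0 < ε) (hr : 0 ≤ r) (n : ℕ) :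
    exp (-(ε * r)) ≤ n ! * exp ε / ε ^ n * (1 + r) ^ (-(n : ℝ)) := by
  have hr₁ : 0 < 1 + r := by linarith
  -- Taylor: `(ε (1 + r))ⁿ / n! ≤ exp (ε (1 + r)) = exp ε · exp (ε r)`
  have htaylor := pow_div_factorial_le_exp _ (mul_pos hε hr₁).le n
  rw [mul_pow, div_le_iff₀ (by positivity), mul_add, mul_one, exp_add] at htaylor
  rw [rpow_neg hr₁.le, rpow_natCast, exp_neg, ← div_eq_mul_inv, le_div_iff₀ (by positivity),
    inv_mul_le_iff₀ (exp_pos _)]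
  calc (1 + r) ^ n = ε ^ n * (1 + r) ^ n / ε ^ n := by field_simp
    _ ≤ exp ε * exp (ε * r) * n ! / ε ^ n := by gcongr
    _ = exp (ε * r) * (n ! * exp ε / ε ^ n) := by ring

variable {α θ s t a b R : ℝ}

lemma one_add_rpow_mul_one_add_rpow_le (hα : 0 ≤ α) (ha : 0 ≤ a) (hb : 0 ≤ b) (hR : 0 < R)
    (hab : R ≤ a + b) (hθ : 0 ≤ θ) (hs : θ ≤ s) (ht : θ ≤ t) :
    (1 + a) ^ (-(s * α)) * (1 + b) ^ (-(t * α)) ≤ R ^ (-(θ * α)) := by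
  have hθα : 0 ≤ θ * α := mul_nonneg hθ hα
  calc (1 + a) ^ (-(s * α)) * (1 + b) ^ (-(t * α))
      ≤ (1 + a) ^ (-(θ * α)) * (1 + b) ^ (-(θ * α)) := by
        gcongr <;> nlinarith
    _ = ((1 + a) * (1 + b)) ^ (-(θ * α)) := (mul_rpow (by linarith) (by linarith)).symm
    _ ≤ R ^ (-(θ * α)) :=
        rpow_le_rpow_of_nonpos hR (by nlinarith) (neg_nonpos.mpr hθα)

lemma exp_mul_exp_le (hb : 0 ≤ b) (hab : R ≤ a + b) (hθ : 0 ≤ θ) (ht : θ ≤ t) :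
    exp (-(s * a)) * exp (-(t * b)) ≤ exp (-(θ * R)) * exp (-((s - θ) * a)) := by
  rw [← exp_add, ← exp_add, exp_le_exp]
  nlinarith

lemma decay_rpow_mul_decay_rpow_le (hα : 0 ≤ α) (ha : 0 ≤ a) (hb : 0 ≤ b) (hR : 0 < R)
    (hab : R ≤ a + b) (hθ : 0 ≤ θ) (hs : θ ≤ s) (ht : θ ≤ t) :
    ((1 + a) ^ (-α) * exp (-a)) ^ s * ((1 + b) ^ (-α) * exp (-b)) ^ t
      ≤ (R ^ (-α) * exp (-R)) ^ θ * exp (-((s - θ) * a)) := by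
  calc ((1 + a) ^ (-α) * exp (-a)) ^ s * ((1 + b) ^ (-α) * exp (-b)) ^ t
      = ((1 + a) ^ (-(s * α)) * (1 + b) ^ (-(t * α))) * (exp (-(s * a)) * exp (-(t * b))) := by
        rw [mul_rpow (by positivity) (by positivity), mul_rpow (by positivity) (by positivity),
          ← rpow_mul (by linarith), ← rpow_mul (by linarith), ← exp_mul, ← exp_mul]
        ring_nf
    _ ≤ R ^ (-(θ * α)) * (exp (-(θ * R)) * exp (-((s - θ) * a))) :=
        mul_le_mul (one_add_rpow_mul_one_add_rpow_le hα ha hb hR hab hθ hs ht)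
          (exp_mul_exp_le hb hab hθ ht) (by positivity) (by positivity)
    _ = (R ^ (-α) * exp (-R)) ^ θ * exp (-((s - θ) * a)) := by
        rw [mul_rpow (by positivity) (by positivity), ← rpow_mul hR.le, ← exp_mul]
        ring_nf

section HaarMeasure

variable {E : Type*} [NormedAddCommGroup E] [NormedSpace ℝ E] [FiniteDimensional ℝ E]
  [MeasurableSpace E] [BorelSpace E] (μ : Measure E) [μ.IsAddHaarMeasure]

lemma integrable_exp_neg_mul_norm {ε : ℝ} (hε : 0 < ε) :
    Integrable (fun x : E ↦ exp (-(ε * ‖x‖))) μ := by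
  have hn : (finrank ℝ E : ℝ) < (finrank ℝ E + 1 : ℕ) := by push_cast; linarith
  refine ((integrable_one_add_norm (μ := μ) hn).const_mul
    ((finrank ℝ E + 1) ! * exp ε / ε ^ (finrank ℝ E + 1))).mono' (by fun_prop)
    (Filter.Eventually.of_forall fun x ↦ ?_)
  rw [norm_of_nonneg (exp_pos _).le]
  exact exp_neg_mul_le_one_add_rpow hε (norm_nonneg x) _

theorem integral_abs_rpow_mul_abs_rpow_le {Q : E → ℝ} {C₁ : ℝ} (hC₁ : 0 ≤ C₁) (hα : 0 ≤ α)
    (hdecay : ∀ x, |Q x| ≤ C₁ * ((1 + ‖x‖) ^ (-α) * exp (-‖x‖)))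
    (hθ : 0 ≤ θ) (hs : θ < s) (ht : θ ≤ t) {z₁ z₂ : E} (hz : 0 < ‖z₁ - z₂‖) :
    ∫ x, |Q (x - z₁)| ^ s * |Q (x - z₂)| ^ t ∂μ
      ≤ C₁ ^ s * C₁ ^ t * (∫ x, exp (-((s - θ) * ‖x‖)) ∂μ)
        * (‖z₁ - z₂‖ ^ (-α) * exp (-‖z₁ - z₂‖)) ^ θ := by
  set P := (‖z₁ - z₂‖ ^ (-α) * exp (-‖z₁ - z₂‖)) ^ θ
  have hpointwise (x : E) : |Q (x - z₁)| ^ s * |Q (x - z₂)| ^ t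
      ≤ C₁ ^ s * C₁ ^ t * P * exp (-((s - θ) * ‖x - z₁‖)) := by
    have hdist : ‖z₁ - z₂‖ ≤ ‖x - z₁‖ + ‖x - z₂‖ := by
      simpa only [sub_sub_sub_cancel_left, add_comm] using norm_sub_le (x - z₂) (x - z₁)
    calc |Q (x - z₁)| ^ s * |Q (x - z₂)| ^ t
        ≤ (C₁ * ((1 + ‖x - z₁‖) ^ (-α) * exp (-‖x - z₁‖))) ^ s
          * (C₁ * ((1 + ‖x - z₂‖) ^ (-α) * exp (-‖x - z₂‖))) ^ t := by
          have ht₀ : 0 ≤ t := hθ.trans ht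
          exact mul_le_mul (rpow_le_rpow (abs_nonneg _) (hdecay _) (by linarith))
            (rpow_le_rpow (abs_nonneg _) (hdecay _) ht₀) (by positivity) (by positivity)
      _ = C₁ ^ s * C₁ ^ t * (((1 + ‖x - z₁‖) ^ (-α) * exp (-‖x - z₁‖)) ^ s
          * ((1 + ‖x - z₂‖) ^ (-α) * exp (-‖x - z₂‖)) ^ t) := by
          rw [mul_rpow hC₁ (by positivity), mul_rpow hC₁ (by positivity)]
          ring
      _ ≤ C₁ ^ s * C₁ ^ t * (P * exp (-((s - θ) * ‖x - z₁‖))) := by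
          refine mul_le_mul_of_nonneg_left ?_ (by positivity)
          exact decay_rpow_mul_decay_rpow_le hα (norm_nonneg _) (norm_nonneg _) hz hdist hθ
            hs.le ht
      _ = C₁ ^ s * C₁ ^ t * P * exp (-((s - θ) * ‖x - z₁‖)) := by ring
  have hintegrable :=
    ((integrable_exp_neg_mul_norm μ (sub_pos.mpr hs)).comp_sub_right z₁).const_mul
      (C₁ ^ s * C₁ ^ t * P)
  calc ∫ x, |Q (x - z₁)| ^ s * |Q (x - z₂)| ^ t ∂μ
      ≤ ∫ x, C₁ ^ s * C₁ ^ t * P * exp (-((s - θ) * ‖x - z₁‖)) ∂μ :=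
        integral_mono_of_nonneg (.of_forall fun _ ↦ by positivity) hintegrable
          (.of_forall hpointwise)
    _ = C₁ ^ s * C₁ ^ t * (∫ x, exp (-((s - θ) * ‖x‖)) ∂μ) * P := by
        rw [integral_const_mul, integral_sub_right_eq_self (fun x ↦ exp (-((s - θ) * ‖x‖)))]
        ring

end HaarMeasure

theorem statement17_general
    (d : ℕ) (hd : 1 ≤ d) (p : ℝ) (Q : Euc d → ℝ)
    (C₁ : ℝ) (hC₁ : 0 < C₁)
    (hdecay : ∀ x, |Q x| ≤ C₁ * (1 + ‖x‖) ^ (-(((d : ℝ) - 1) / 2)) * Real.exp (-‖x‖))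
    (θ : ℝ) (hθ : 1 < θ) (hθ' : θ < min (p - 1) 2) :
    ∃ C > (0 : ℝ), ∀ z₁ z₂ : Euc d, 1 ≤ ‖z₁ - z₂‖ →
      (∫ x, |Q (x - z₁)| ^ (2 : ℝ) * |Q (x - z₂)| ^ (p - 1))
        ≤ C * (‖z₁ - z₂‖ ^ (-(((d : ℝ) - 1) / 2)) * Real.exp (-‖z₁ - z₂‖)) ^ θ := by
  have hα : 0 ≤ ((d : ℝ) - 1) / 2 := by
    have : (1 : ℝ) ≤ d := by exact_mod_cast hd
    linarith
  obtain ⟨hθp, hθ2⟩ := lt_min_iff.mp hθ'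
  set K := C₁ ^ (2 : ℝ) * C₁ ^ (p - 1) * ∫ x : Euc d, exp (-((2 - θ) * ‖x‖))
  have hK : 0 ≤ K := by
    have : 0 ≤ ∫ x : Euc d, exp (-((2 - θ) * ‖x‖)) := integral_nonneg fun _ ↦ (exp_pos _).le
    positivity
  refine ⟨K + 1, by positivity, fun z₁ z₂ hz ↦ ?_⟩
  calc (∫ x, |Q (x - z₁)| ^ (2 : ℝ) * |Q (x - z₂)| ^ (p - 1))
      ≤ K * (‖z₁ - z₂‖ ^ (-(((d : ℝ) - 1) / 2)) * Real.exp (-‖z₁ - z₂‖)) ^ θ :=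
        integral_abs_rpow_mul_abs_rpow_le volume hC₁.le hα
          (fun x ↦ (hdecay x).trans_eq (mul_assoc _ _ _)) (by linarith) hθ2 hθp.le
          (by linarith)
    _ ≤ (K + 1) * (‖z₁ - z₂‖ ^ (-(((d : ℝ) - 1) / 2)) * Real.exp (-‖z₁ - z₂‖)) ^ θ := by
        gcongr
        linarith

/-- Nonlinear interaction estimate: for a function with the ground-state decay
rate and any `1 < θ < min(p−1, 2)`, the interaction integral
`∫ |Q(·−z₁)|² |Q(·−z₂)|^{p−1}` is controlled by the `θ`-th power of the
ground-state profile at the distance between the centers. -/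
theorem statement17
    (d : ℕ) (hd : 1 ≤ d) (p : ℝ) (hp : 2 < p) (Q : Euc d → ℝ) (hmeas : Measurable Q)
    (C₁ : ℝ) (hC₁ : 0 < C₁)
    (hdecay : ∀ x, |Q x| ≤ C₁ * (1 + ‖x‖) ^ (-(((d : ℝ) - 1) / 2)) * Real.exp (-‖x‖))
    (θ : ℝ) (hθ : 1 < θ) (hθ' : θ < min (p - 1) 2) :
    ∃ C > (0 : ℝ), ∀ z₁ z₂ : Euc d, 1 ≤ ‖z₁ - z₂‖ →
      (∫ x, |Q (x - z₁)| ^ (2 : ℝ) * |Q (x - z₂)| ^ (p - 1))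
        ≤ C * (‖z₁ - z₂‖ ^ (-(((d : ℝ) - 1) / 2)) * Real.exp (-‖z₁ - z₂‖)) ^ θ :=
  statement17_general d hd p Q C₁ hC₁ hdecay θ hθ hθ'
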